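/- Under the zero-measure intersection of moments assumption, the conditional Gaussian family G_B satisfies the strengthened linear-independence condition (b4): there exists a full-measure subset Y ⊂ R^{mM} such that for every positive-measure subset Y' ⊂ Y and every positive-measure subset Z ⊂ R^m, any finite subset of G_B is linearly independent as functions of (z_t, z_{t-1},…,z_{t-M}) restricted to Z × Y'. -/

import Mathlib

open MeasureTheory Matrix

/-!
Fix a conditioning value `h`. A combination of the densities that vanishes on `Z × {h}` vanishes
on `Z`; it is real-analytic in `z`, and a nonzero real-analytic function on `ℝⁿ` has a null zero
set (isolated zeros in one variable plus Fubini), so it vanishes everywhere. Gaussian densities with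
pairwise distinct parameters are linearly independent: along a generic ray `t ↦ t • v` they are
positive multiples of `exp (a t² + b t)` with pairwise distinct `(a, b)`, and such exponentials are
separated by their growth as `t → ∞`. For finitely many members of the family the parameters are
pairwise distinct off a null set of `h`, so a good `h` lies in every `Y'` of positive measure and
one can take `Y` to be everything.
-/

/-- The multivariate Gaussian density on `ι → ℝ` with mean `μ` and covariance `S`. -/
noncomputable def gaussianPDF {ι : Type*} [Fintype ι] [DecidableEq ι]
    (μ : ι → ℝ) (S : Matrix ι ι ℝ) (z : ι → ℝ) : ℝ :=
  Real.exp (-(1 / 2) * ((z - μ) ⬝ᵥ S⁻¹.mulVec (z - μ))) /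
    Real.sqrt ((2 * Real.pi) ^ Fintype.card ι * S.det)

/-- Linear independence (under finite mixtures) of a family of functions
restricted to a subset `S` of their domain. -/
def LinIndepOn {A E : Type*} (S : Set E) (F : A → E → ℝ) : Prop :=
  ∀ (n : ℕ) (a : Fin n → A), Function.Injective a →
    LinearIndependent ℝ (fun i : Fin n => S.restrict (F (a i)))

open Filter Topology Set Function

section ZeroSets

variable {E : Type*} [NormedAddCommGroup E] [NormedSpace ℝ E]

theorem AnalyticOnNhd.countable_setOf_eq_zero {f : ℝ → E} (hf : AnalyticOnNhd ℝ f univ)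
    (hne : ∃ x, f x ≠ 0) : {x | f x = 0}.Countable := by
  obtain hzero | hcod := hf.eqOn_zero_or_eventually_ne_zero_of_preconnected isPreconnected_univ
  · obtain ⟨x, hx⟩ := hne
    exact absurd (hzero (mem_univ x)) hx
  · simpa using (HereditarilyLindelofSpace.isLindelof _).countable_of_isDiscrete
      (isDiscrete_of_codiscreteWithin (s := {x | f x = 0}) hcod)

theorem AnalyticOnNhd.measure_prod_setOf_eq_zero {F : Type*} [NormedAddCommGroup F]
    [NormedSpace ℝ F] [MeasurableSpace F] [OpensMeasurableSpace F]
    {ν : Measure F} [SFinite ν]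
    (hF : ∀ h : F → E, AnalyticOnNhd ℝ h univ → (∃ y, h y ≠ 0) → ν {y | h y = 0} = 0)
    {g : ℝ × F → E} (hg : AnalyticOnNhd ℝ g univ) (hne : ∃ p, g p ≠ 0) :
    (volume.prod ν) {p | g p = 0} = 0 := by
  obtain ⟨⟨t₀, y₀⟩, hp⟩ := hne
  rw [Measure.measure_prod_null (isClosed_eq hg.continuous continuous_const).measurableSet]
  -- the zero set meets the line `ℝ × {y₀}` in countably many points, and every other
  -- vertical slice is the zero set of a function that does not vanish at `y₀`
  have hline : {t | g (t, y₀) = 0}.Countable :=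
    AnalyticOnNhd.countable_setOf_eq_zero
      (fun t _ => (hg _ trivial).comp (analyticAt_id.prod analyticAt_const)) ⟨t₀, hp⟩
  filter_upwards [measure_eq_zero_iff_ae_notMem.mp (hline.measure_zero volume)] with t ht
  exact hF _ (fun y _ => (hg _ trivial).comp (analyticAt_const.prod analyticAt_id)) ⟨y₀, ht⟩

theorem analyticAt_finCons {n : ℕ} (p : ℝ × (Fin n → ℝ)) :
    AnalyticAt ℝ (fun q : ℝ × (Fin n → ℝ) => (Fin.cons q.1 q.2 : Fin (n + 1) → ℝ)) p := by
  rw [analyticAt_pi_iff]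
  intro i
  cases i using Fin.cases
  · exact analyticAt_fst
  · exact ((ContinuousLinearMap.proj _).comp (ContinuousLinearMap.snd ℝ ℝ _)).analyticAt p

theorem AnalyticOnNhd.volume_setOf_eq_zero :
    ∀ {n : ℕ} {f : (Fin n → ℝ) → E}, AnalyticOnNhd ℝ f univ → (∃ x, f x ≠ 0) →
      volume {x | f x = 0} = 0
  | 0, f, _, ⟨x, hx⟩ => by
    convert measure_empty (μ := volume)
    exact eq_empty_of_forall_notMem fun y hy => hx (Subsingleton.elim x y ▸ hy)
  | n + 1, f, hf, ⟨x, hx⟩ => by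
    let e := MeasurableEquiv.piFinSuccAbove (fun _ : Fin (n + 1) => ℝ) 0
    have he : ∀ p, e.symm p = Fin.cons p.1 p.2 := fun p => Fin.insertNth_zero' p.1 p.2
    have hg : AnalyticOnNhd ℝ (fun p => f (e.symm p)) univ := fun p _ => by
      simp only [he]
      exact (hf _ trivial).comp (analyticAt_finCons p)
    have hpre : {x | f x = 0} = e ⁻¹' {p | f (e.symm p) = 0} := by
      ext; simp
    rw [hpre, (volume_preserving_piFinSuccAbove _ 0).measure_preimage
      (isClosed_eq hg.continuous continuous_const).measurableSet.nullMeasurableSet,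
      Measure.volume_eq_prod]
    exact AnalyticOnNhd.measure_prod_setOf_eq_zero (fun h => volume_setOf_eq_zero) hg
      ⟨e x, by simpa using hx⟩

end ZeroSets

theorem MeasureTheory.exists_mem_injective_of_measure_eq_zero {α β ι : Type*}
    [MeasurableSpace α] [Countable ι] {μ : Measure α} {f : ι → α → β}
    (hf : ∀ i j, i ≠ j → μ {x | f i x = f j x} = 0) {s : Set α} (hs : μ s ≠ 0) :
    ∃ x ∈ s, Injective fun i => f i x := by
  have hae : ∀ᵐ x ∂μ, ∀ i j, f i x = f j x → i = j := by
    simp only [ae_all_iff]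
    intro i j
    by_cases hij : i = j
    · simp [hij]
    · simpa [hij] using measure_eq_zero_iff_ae_notMem.mp (hf i j hij)
  obtain ⟨x, hxs, hx⟩ := nonempty_of_measure_ne_zero <|
    (measure_sdiff_null (ae_iff.mp hae)).symm ▸ hs
  exact ⟨x, hxs, fun i j => not_not.mp hx i j⟩

theorem LinearIndependent.domRestrict_of_analyticOnNhd {ι : Type*} {n : ℕ}
    {f : ι → (Fin n → ℝ) → ℝ} (hli : LinearIndependent ℝ f)
    (hf : ∀ i, AnalyticOnNhd ℝ (f i) univ) {Z : Set (Fin n → ℝ)} (hZ : volume Z ≠ 0) :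
    LinearIndependent ℝ fun i => Z.domRestrict (f i) := by
  rw [linearIndependent_iff'] at hli ⊢
  intro s g hg
  apply hli s g
  by_contra hne
  obtain ⟨x, hx⟩ := Function.ne_iff.mp hne
  refine hZ (measure_mono_null (fun z hz => ?_) (AnalyticOnNhd.volume_setOf_eq_zero
    (Finset.analyticOnNhd_sum s fun i _ => (hf i).const_smul) ⟨x, hx⟩))
  simpa [Set.domRestrict_apply] using congrFun hg ⟨z, hz⟩

theorem tendsto_quadratic_atBot {a b : ℝ} (h : a < 0 ∨ a = 0 ∧ b < 0) :
    Tendsto (fun t : ℝ => a * t ^ 2 + b * t) atTop atBot := by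
  obtain ha | ⟨rfl, hb⟩ := h
  · have hlin : Tendsto (fun t : ℝ => a * t + b) atTop atBot :=
      tendsto_atBot_add_const_right _ b (tendsto_id.const_mul_atTop_of_neg ha)
    convert tendsto_id.atTop_mul_atBot₀ hlin using 2 with t
    simp only [id]
    ring
  · simpa using tendsto_id.const_mul_atTop_of_neg hb

theorem linearIndependent_exp_quadratic {ι : Type*} {p : ι → ℝ × ℝ} (hp : Injective p) :
    LinearIndependent ℝ fun i (t : ℝ) => Real.exp ((p i).1 * t ^ 2 + (p i).2 * t) := by
  classical
  rw [linearIndependent_iff']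
  intro s g hg i hi
  by_contra hgi
  obtain ⟨k, hk, hmax⟩ := (s.filter (g · ≠ 0)).exists_max_image (toLex ∘ p)
    ⟨i, Finset.mem_filter.mpr ⟨hi, hgi⟩⟩
  rw [Finset.mem_filter] at hk
  -- dividing by the exponential of the lexicographically largest exponent and letting
  -- `t → ∞` kills every term but the `k`-th
  let r : ι → ℝ → ℝ := fun j t =>
    g j * Real.exp (((p j).1 - (p k).1) * t ^ 2 + ((p j).2 - (p k).2) * t)
  have hr : ∀ t, ∑ j ∈ s, r j t = 0 := fun t => by
    have hsum : ∑ j ∈ s, g j * Real.exp ((p j).1 * t ^ 2 + (p j).2 * t) = 0 := by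
      simpa using congrFun hg t
    calc ∑ j ∈ s, r j t
        = (∑ j ∈ s, g j * Real.exp ((p j).1 * t ^ 2 + (p j).2 * t)) *
            Real.exp (-((p k).1 * t ^ 2 + (p k).2 * t)) := by
          rw [Finset.sum_mul]
          refine Finset.sum_congr rfl fun j _ => ?_
          rw [mul_assoc, ← Real.exp_add]
          simp only [r]
          ring_nf
      _ = 0 := by rw [hsum, zero_mul]
  have hlim : ∀ j ∈ s, Tendsto (r j) atTop (𝓝 (if j = k then g k else 0)) := by
    intro j hj
    by_cases hjk : j = k
    · subst hjk
      simp [r]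
    by_cases hgj : g j = 0
    · simp [r, hgj, hjk]
    have hlt : toLex (p j) < toLex (p k) :=
      (hmax j (Finset.mem_filter.mpr ⟨hj, hgj⟩)).lt_of_ne (by simpa using hp.ne hjk)
    have hneg : (p j).1 - (p k).1 < 0 ∨ (p j).1 - (p k).1 = 0 ∧ (p j).2 - (p k).2 < 0 := by
      simpa [Prod.Lex.lt_iff, sub_eq_zero] using hlt
    simpa [hjk] using
      ((Real.tendsto_exp_atBot.comp (tendsto_quadratic_atBot hneg)).const_mul (g j))
  have hgk := tendsto_nhds_unique (tendsto_finsetSum s hlim)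
    (by simp only [hr]; exact tendsto_const_nhds)
  simp [hk.1] at hgk
  exact hk.2 hgk

theorem AnalyticAt.dotProduct_mulVec {ι F : Type*} [Fintype ι] [NormedAddCommGroup F]
    [NormedSpace ℝ F] {f g : F → ι → ℝ} {x : F} (A : Matrix ι ι ℝ)
    (hf : AnalyticAt ℝ f x) (hg : AnalyticAt ℝ g x) :
    AnalyticAt ℝ (fun z => f z ⬝ᵥ A *ᵥ g z) x := by
  rw [analyticAt_pi_iff] at hf hg
  simp only [dotProduct, mulVec]
  fun_prop

namespace Matrix

variable {ι : Type*} [Fintype ι]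

theorem IsSymm.dotProduct_mulVec_comm {R : Type*} [CommSemiring R] {A : Matrix ι ι R}
    (hA : A.IsSymm) (v w : ι → R) : v ⬝ᵥ A *ᵥ w = w ⬝ᵥ A *ᵥ v := by
  rw [dotProduct_mulVec, ← mulVec_transpose, hA.eq, dotProduct_comm]

theorem IsSymm.eq_of_forall_dotProduct_mulVec_self {A B : Matrix ι ι ℝ} (hA : A.IsSymm)
    (hB : B.IsSymm) (h : ∀ v, v ⬝ᵥ A *ᵥ v = v ⬝ᵥ B *ᵥ v) : A = B := by
  rw [← sub_eq_zero, ext_iff_mulVec]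
  have hq : ∀ v, v ⬝ᵥ (A - B) *ᵥ v = 0 := fun v => by
    rw [sub_mulVec, dotProduct_sub, h, sub_self]
  intro w
  rw [zero_mulVec]
  refine dotProduct_eq_zero _ fun v => ?_
  have hpol := hq (v + w)
  rw [mulVec_add, add_dotProduct, dotProduct_add, dotProduct_add, hq, hq,
    (hA.sub hB).dotProduct_mulVec_comm w v] at hpol
  rw [dotProduct_comm]
  linarith

end Matrix

section Gaussian

variable {ι : Type*} [Fintype ι] [DecidableEq ι]

/-- The coefficients `(a, b)` of `gaussianPDF μ S (t • v) ∝ exp (a t² + b t)`. -/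
noncomputable def gaussianRayCoeffs (μ : ι → ℝ) (S : Matrix ι ι ℝ) (v : ι → ℝ) : ℝ × ℝ :=
  (-(1 / 2) * (v ⬝ᵥ S⁻¹ *ᵥ v), v ⬝ᵥ S⁻¹ *ᵥ μ)

theorem gaussianPDF_pos {μ : ι → ℝ} {S : Matrix ι ι ℝ} (hS : S.PosDef) (z : ι → ℝ) :
    0 < gaussianPDF μ S z :=
  div_pos (Real.exp_pos _) (Real.sqrt_pos.mpr (mul_pos (by positivity) hS.det_pos))

theorem gaussianPDF_smul {μ : ι → ℝ} {S : Matrix ι ι ℝ} (hS : S.IsSymm) (v : ι → ℝ) (t : ℝ) :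
    gaussianPDF μ S (t • v) = gaussianPDF μ S 0 *
      Real.exp ((gaussianRayCoeffs μ S v).1 * t ^ 2 + (gaussianRayCoeffs μ S v).2 * t) := by
  have hcomm := hS.inv.dotProduct_mulVec_comm μ v
  rw [gaussianPDF, gaussianPDF, gaussianRayCoeffs, div_mul_eq_mul_div, ← Real.exp_add]
  congr 2
  simp only [sub_dotProduct, dotProduct_sub, mulVec_sub, mulVec_smul, smul_dotProduct,
    dotProduct_smul, smul_eq_mul, zero_sub, neg_dotProduct, dotProduct_neg, mulVec_neg]
  linear_combination (t / 2) * hcomm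

theorem analyticAt_gaussianPDF (μ : ι → ℝ) (S : Matrix ι ι ℝ) (z : ι → ℝ) :
    AnalyticAt ℝ (gaussianPDF μ S) z := by
  unfold gaussianPDF
  simp_rw [div_eq_mul_inv]
  exact ((analyticAt_const.mul ((analyticAt_id.sub analyticAt_const).dotProduct_mulVec _
    (analyticAt_id.sub analyticAt_const))).rexp).mul analyticAt_const

theorem analyticAt_gaussianRayCoeffs (μ : ι → ℝ) (S : Matrix ι ι ℝ) (v : ι → ℝ) :
    AnalyticAt ℝ (gaussianRayCoeffs μ S) v :=
  (analyticAt_const.mul (analyticAt_id.dotProduct_mulVec _ analyticAt_id)).prod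
    (analyticAt_id.dotProduct_mulVec _ analyticAt_const)

theorem gaussianRayCoeffs_eq_iff {μ μ' : ι → ℝ} {S S' : Matrix ι ι ℝ} (hS : S.PosDef)
    (hS' : S'.PosDef) : gaussianRayCoeffs μ S = gaussianRayCoeffs μ' S' ↔ μ = μ' ∧ S = S' := by
  refine ⟨fun h => ?_, by rintro ⟨rfl, rfl⟩; rfl⟩
  have hsymm : ∀ {T : Matrix ι ι ℝ}, T.PosDef → T⁻¹.IsSymm := fun hT =>
    (isHermitian_iff_isSymm.mp hT.isHermitian).inv
  have hinv : S⁻¹ = S'⁻¹ := (hsymm hS).eq_of_forall_dotProduct_mulVec_self (hsymm hS')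
    fun v => by simpa [gaussianRayCoeffs] using congrArg Prod.fst (congrFun h v)
  refine ⟨mulVec_injective_of_det_ne_zero hS.inv.det_pos.ne' (dotProduct_eq _ _ fun v => ?_),
    Matrix.inv_inj hinv (isUnit_iff_ne_zero.mpr hS.det_pos.ne')⟩
  simpa [gaussianRayCoeffs, hinv, dotProduct_comm v] using congrArg Prod.snd (congrFun h v)

end Gaussian

theorem linearIndependent_gaussianPDF {ι : Type*} {m : ℕ} {μ : ι → Fin m → ℝ}
    {S : ι → Matrix (Fin m) (Fin m) ℝ} (hS : ∀ i, (S i).PosDef)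
    (hinj : Injective fun i => (μ i, S i)) :
    LinearIndependent ℝ fun i => gaussianPDF (μ i) (S i) := by
  rw [linearIndependent_iff_finset_linearIndependent]
  intro s
  have hdistinct : ∀ i j : s, i ≠ j →
      volume {v | gaussianRayCoeffs (μ i) (S i) v = gaussianRayCoeffs (μ j) (S j) v} = 0 := by
    intro i j hij
    have hne : ∃ v, gaussianRayCoeffs (μ i) (S i) v - gaussianRayCoeffs (μ j) (S j) v ≠ 0 := by
      by_contra! h
      obtain ⟨hμ, hS'⟩ :=
        (gaussianRayCoeffs_eq_iff (hS i) (hS j)).mp (funext fun v => sub_eq_zero.mp (h v))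
      exact hij (Subtype.ext (hinj (Prod.ext hμ hS')))
    simpa [sub_eq_zero] using AnalyticOnNhd.volume_setOf_eq_zero
      (fun v _ => (analyticAt_gaussianRayCoeffs _ _ v).sub (analyticAt_gaussianRayCoeffs _ _ v))
      hne
  obtain ⟨v, -, hv⟩ := exists_mem_injective_of_measure_eq_zero hdistinct
    (isOpen_univ.measure_ne_zero volume univ_nonempty)
  let c : s → ℝˣ := fun i => Units.mk0 _ (gaussianPDF_pos (μ := μ i) (hS i) 0).ne'
  refine .of_comp (LinearMap.funLeft ℝ ℝ fun t : ℝ => t • v) ?_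
  convert (linearIndependent_exp_quadratic hv).units_smul c using 1
  ext i t
  simp [c, LinearMap.funLeft,
    gaussianPDF_smul (isHermitian_iff_isSymm.mp (hS i).isHermitian)]

/-- under the zero-measure intersection of moments assumption,
the conditional Gaussian family satisfies the strengthened condition (b4): there
is a full-measure set `Y` of conditioning values such that the family restricted
to `Z ×ˢ Y'` is linearly independent for all positive-measure `Z` and `Y' ⊆ Y`. -/
theorem stmt6 {B : Type*} {m M : ℕ}
    (mfun : B → (Fin M → Fin m → ℝ) → Fin m → ℝ)
    (cov : B → (Fin M → Fin m → ℝ) → Matrix (Fin m) (Fin m) ℝ)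
    (hpd : ∀ b h, (cov b h).PosDef)
    (hzero : ∀ b b', b ≠ b' →
      volume {h : Fin M → Fin m → ℝ | mfun b h = mfun b' h ∧ cov b h = cov b' h} = 0) :
    ∃ Y : Set (Fin M → Fin m → ℝ), volume Yᶜ = 0 ∧
      ∀ Y' ⊆ Y, 0 < volume Y' → ∀ Z : Set (Fin m → ℝ), 0 < volume Z →
        LinIndepOn (Z ×ˢ Y') (fun b (p : (Fin m → ℝ) × (Fin M → Fin m → ℝ)) =>
          gaussianPDF (mfun b p.2) (cov b p.2) p.1) := by
  refine ⟨univ, by simp, fun Y' _ hY' Z hZ n a ha => ?_⟩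
  obtain ⟨h₀, hh₀, hinj⟩ := exists_mem_injective_of_measure_eq_zero
    (f := fun i h => (mfun (a i) h, cov (a i) h))
    (fun i j hij => by simpa using hzero _ _ (ha.ne hij)) hY'.ne'
  have hindep : LinearIndependent ℝ fun i =>
      Z.domRestrict (gaussianPDF (mfun (a i) h₀) (cov (a i) h₀)) :=
    (linearIndependent_gaussianPDF (fun i => hpd _ _) hinj).domRestrict_of_analyticOnNhd
      (fun i z _ => analyticAt_gaussianPDF _ _ z) hZ.ne'
  exact hindep.of_comp (LinearMap.funLeft ℝ ℝ fun z : Z => ⟨(z, h₀), z.2, hh₀⟩)
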